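/- arXiv:1811.05437 — 3 statements merged into one kernel-verified Lean document; each statement's English description precedes it below -/
import Mathlib

section
/- For a feasible schedule S with S ≈ E: S violates PEP if and only if there is an attack a ⇝ b with a, b ∈ E in the optimality AF that is not an attack of the feasibility AF; and S violates SEP if and only if there is an argument b ∉ E such that E does not attack b in the optimality AF but b attacks some element of E. -/
open Finset

/-- Attack relation of the feasibility AF: `a_{i,j}` attacks `a_{k,l}` iff `i ≠ k` and `j = l`. -/
def attackF {m n : ℕ} (a b : Fin m × Fin n) : Prop := a.1 ≠ b.1 ∧ a.2 = b.2

/-- A set of arguments is conflict-free. -/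
def conflictFree {α : Type*} (att : α → α → Prop) (E : Set α) : Prop :=
  ∀ a ∈ E, ∀ b ∈ E, ¬ att a b

/-- A set of arguments is a stable extension. -/
def stable {α : Type*} (att : α → α → Prop) (E : Set α) : Prop :=
  conflictFree att E ∧ ∀ b ∉ E, ∃ a ∈ E, att a b

/-- The schedule matrix is a 0/1 matrix. -/
def Binary {m n : ℕ} (x : Fin m → Fin n → ℕ) : Prop := ∀ i j, x i j ≤ 1

/-- Feasibility: each job is assigned to exactly one machine. -/
def Feasible {m n : ℕ} (x : Fin m → Fin n → ℕ) : Prop := ∀ j, ∑ i, x i j = 1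

/-- Completion time (load) `C_i = Σ_j x_{i,j} p_j` of machine `i`. -/
def load {m n : ℕ} (p : Fin n → ℝ) (x : Fin m → Fin n → ℕ) (i : Fin m) : ℝ :=
  ∑ j, (x i j : ℝ) * p j

/-- Correspondence `S ≈ E` between schedules and extensions: `x_{i,j} = 1` iff `a_{i,j} ∈ E`. -/
def Corr {m n : ℕ} (x : Fin m → Fin n → ℕ) (E : Set (Fin m × Fin n)) : Prop :=
  ∀ i j, x i j = 1 ↔ (i, j) ∈ E

/-- `(i, j)` is a critical assignment: `x_{i,j} = 1` and machine `i` attains the makespan. -/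
def Crit {m n : ℕ} (p : Fin n → ℝ) (x : Fin m → Fin n → ℕ) (i : Fin m) (j : Fin n) : Prop :=
  x i j = 1 ∧ ∀ k, load p x k ≤ load p x i

/-- Single Exchange Property. -/
def SEP {m n : ℕ} (p : Fin n → ℝ) (x : Fin m → Fin n → ℕ) : Prop :=
  ∀ i j, Crit p x i j → ∀ i', i' ≠ i → load p x i - load p x i' ≤ p j

/-- Pairwise Exchange Property. -/
def PEP {m n : ℕ} (p : Fin n → ℝ) (x : Fin m → Fin n → ℕ) : Prop :=
  ∀ i j, Crit p x i j → ∀ i' j', i' ≠ i → j' ≠ j → x i' j' = 1 → p j > p j' →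
    load p x i + p j' ≤ load p x i' + p j

/-- Attack relation of the optimality AF for schedule `x`: the feasibility attacks, minus
attacks `(a_{i,j}, a_{i',j})` with `(i,j)` critical and `C_i > C_{i'} + p_j`, plus attacks
`(a_{i',j'}, a_{i,j})` with `(i,j)` critical, `x_{i',j'} = 1`, `i' ≠ i`, `j' ≠ j`,
`p_j > p_{j'}` and `C_i + p_{j'} > C_{i'} + p_j`. -/
def attackS {m n : ℕ} (p : Fin n → ℝ) (x : Fin m → Fin n → ℕ)
    (a b : Fin m × Fin n) : Prop :=
  (attackF a b ∧ ¬ (Crit p x a.1 a.2 ∧ load p x a.1 > load p x b.1 + p a.2))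
  ∨ (Crit p x b.1 b.2 ∧ x a.1 a.2 = 1 ∧ a.1 ≠ b.1 ∧ a.2 ≠ b.2 ∧ p b.2 > p a.2 ∧
      load p x b.1 + p a.2 > load p x a.1 + p b.2)

/-- Attack relation of the fixed-decision AF: feasibility attacks, plus self-attacks on
arguments of `D⁻`, minus all attacks onto arguments of `D⁺`. -/
def attackD {m n : ℕ} (Dm Dp : Set (Fin m × Fin n)) (a b : Fin m × Fin n) : Prop :=
  (attackF a b ∨ (a = b ∧ a ∈ Dm)) ∧ b ∉ Dp

/-- `S` satisfies the negative fixed decisions `D⁻`. -/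
def SatNeg {m n : ℕ} (Dm : Set (Fin m × Fin n)) (x : Fin m → Fin n → ℕ) : Prop :=
  ∀ a ∈ Dm, x a.1 a.2 = 0

/-- `S` satisfies the positive fixed decisions `D⁺`. -/
def SatPos {m n : ℕ} (Dp : Set (Fin m × Fin n)) (x : Fin m → Fin n → ℕ) : Prop :=
  ∀ a ∈ Dp, x a.1 a.2 = 1

/-- Compatibility of fixed decisions `D = (D⁻, D⁺)`. -/
def ValidD {m n : ℕ} (Dm Dp : Set (Fin m × Fin n)) : Prop :=
  Dm ∩ Dp = ∅ ∧ ∀ a ∈ Dp, ∀ b ∈ Dp, a.2 = b.2 → a = b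

/-- There is an explanatory attack (within `E`) or explanatory non-attack (onto `E`'s
complement) for `E` in the AF with attack relation `att`. -/
def explained {m n : ℕ} (att : (Fin m × Fin n) → (Fin m × Fin n) → Prop)
    (E : Set (Fin m × Fin n)) : Prop :=
  (∃ a ∈ E, ∃ b ∈ E, att a b) ∨ (∃ b, b ∉ E ∧ ∀ a ∈ E, ¬ att a b)

/-!
An argument outside `E` is an unassigned pair, so it is neither the target of an attack added
by the optimality AF nor the source of an attack it removes. Hence the attacks between `E` and its
complement are the feasibility attacks minus the removed ones, which witness SEP violations, while
the attacks inside `E` that are not feasibility attacks are the added ones, i.e. PEP violations.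
-/

theorem Feasible.eq_of_eq_one {m n : ℕ} {x : Fin m → Fin n → ℕ} (hfeas : Feasible x)
    {i k : Fin m} {j : Fin n} (hi : x i j = 1) (hk : x k j = 1) : i = k := by
  by_contra hne
  have h2 : 2 ≤ ∑ i', x i' j := by
    have := Finset.sum_le_sum_of_subset (f := fun i' => x i' j) (subset_univ {i, k})
    rwa [sum_pair hne, hi, hk] at this
  rw [hfeas j] at h2
  omega

section

variable {m n : ℕ} {p : Fin n → ℝ} {x : Fin m → Fin n → ℕ} {E : Set (Fin m × Fin n)}
  {a b : Fin m × Fin n}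

theorem attackS_and_not_attackF_iff :
    attackS p x a b ∧ ¬ attackF a b ↔
      Crit p x b.1 b.2 ∧ x a.1 a.2 = 1 ∧ a.1 ≠ b.1 ∧ a.2 ≠ b.2 ∧ p b.2 > p a.2 ∧
        load p x b.1 + p a.2 > load p x a.1 + p b.2 := by
  constructor
  · rintro ⟨⟨hF, -⟩ | hadded, hnF⟩
    · exact absurd hF hnF
    · exact hadded
  · intro hadded
    exact ⟨Or.inr hadded, fun hF => hadded.2.2.2.1 hF.2⟩

theorem not_PEP_iff (hc : Corr x E) :
    ¬ PEP p x ↔ ∃ a ∈ E, ∃ b ∈ E, attackS p x a b ∧ ¬ attackF a b := by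
  simp only [attackS_and_not_attackF_iff]
  constructor
  · intro h
    simp only [PEP, not_forall, not_le] at h
    obtain ⟨i, j, hcrit, i', j', hi', hj', hx', hpj, hlt⟩ := h
    exact ⟨(i', j'), (hc i' j').mp hx', (i, j), (hc i j).mp hcrit.1,
      hcrit, hx', hi', hj', hpj, hlt⟩
  · rintro ⟨a, -, b, -, hcrit, hxa, hne₁, hne₂, hpj, hlt⟩ hpep
    exact (hpep b.1 b.2 hcrit a.1 a.2 hne₁ hne₂ hxa hpj).not_gt hlt

theorem attackS_iff_attackF_of_ne_one (hb : x a.1 a.2 ≠ 1) :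
    attackS p x a b ↔ attackF a b := by
  constructor
  · rintro (⟨hF, -⟩ | ⟨-, hxa, -⟩)
    · exact hF
    · exact absurd hxa hb
  · intro hF
    exact Or.inl ⟨hF, fun hcrit => hb hcrit.1.1⟩

theorem attackS_iff_of_ne_one (hb : x b.1 b.2 ≠ 1) :
    attackS p x a b ↔
      attackF a b ∧ ¬ (Crit p x a.1 a.2 ∧ load p x a.1 > load p x b.1 + p a.2) := by
  refine ⟨?_, Or.inl⟩
  rintro (hremaining | ⟨hcrit, -⟩)
  · exact hremaining
  · exact absurd hcrit.1 hb

theorem not_SEP_iff (hfeas : Feasible x) (hc : Corr x E) :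
    ¬ SEP p x ↔
      ∃ b, b ∉ E ∧ (∀ a ∈ E, ¬ attackS p x a b) ∧ ∃ c ∈ E, attackS p x b c := by
  constructor
  · intro h
    simp only [SEP, not_forall, not_le] at h
    obtain ⟨i, j, hcrit, i', hi', hlt⟩ := h
    have hx' : x i' j ≠ 1 := fun h => hi' (hfeas.eq_of_eq_one h hcrit.1)
    refine ⟨(i', j), fun hmem => hx' ((hc i' j).mpr hmem), ?_, (i, j), (hc i j).mp hcrit.1,
      (attackS_iff_attackF_of_ne_one hx').mpr ⟨hi', rfl⟩⟩
    rintro ⟨k, l⟩ ha hatt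
    obtain ⟨⟨-, rfl : l = j⟩, hkept⟩ := (attackS_iff_of_ne_one hx').mp hatt
    obtain rfl : k = i := hfeas.eq_of_eq_one ((hc k l).mpr ha) hcrit.1
    exact hkept ⟨hcrit, by linarith⟩
  · rintro ⟨b, hbE, hunattacked, c, hcE, hatt⟩ hsep
    have hxb : x b.1 b.2 ≠ 1 := fun h => hbE ((hc b.1 b.2).mp h)
    obtain ⟨hne, hj⟩ := (attackS_iff_attackF_of_ne_one hxb).mp hatt
    have hcb : attackF c b := ⟨Ne.symm hne, hj.symm⟩
    have hremoved := hunattacked c hcE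
    rw [attackS_iff_of_ne_one hxb, not_and_not_right] at hremoved
    obtain ⟨hcrit, hgt⟩ := hremoved hcb
    linarith [hsep c.1 c.2 hcrit b.1 hne]

end

theorem stmt13_general {m n : ℕ} (p : Fin n → ℝ)
    (x : Fin m → Fin n → ℕ) (hfeas : Feasible x)
    (E : Set (Fin m × Fin n)) (hc : Corr x E) :
    (¬ PEP p x ↔ ∃ a ∈ E, ∃ b ∈ E, attackS p x a b ∧ ¬ attackF a b) ∧
    (¬ SEP p x ↔ ∃ b, b ∉ E ∧ (∀ a ∈ E, ¬ attackS p x a b) ∧ ∃ c ∈ E, attackS p x b c) :=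
  ⟨not_PEP_iff hc, not_SEP_iff hfeas hc⟩

theorem stmt13 {m n : ℕ} (p : Fin n → ℝ) (hp : ∀ j, 0 ≤ p j)
    (x : Fin m → Fin n → ℕ) (hx : Binary x) (hfeas : Feasible x)
    (E : Set (Fin m × Fin n)) (hc : Corr x E) :
    (¬ PEP p x ↔ ∃ a ∈ E, ∃ b ∈ E, attackS p x a b ∧ ¬ attackF a b) ∧
    (¬ SEP p x ↔ ∃ b, b ∉ E ∧ (∀ a ∈ E, ¬ attackS p x a b) ∧ ∃ c ∈ E, attackS p x b c) :=
  stmt13_general p x hfeas E hc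
end

section
/- For a feasible schedule S with S ≈ E and fixed decisions D = (D⁻, D⁺): S violates D⁻ if and only if some argument in E attacks itself in the fixed-decision AF; and S violates D⁺ if and only if some argument b ∉ E is unattacked in the fixed-decision AF. -/
open Finset

theorem Binary.eq_one_of_ne_zero {m n : ℕ} {x : Fin m → Fin n → ℕ} (hx : Binary x)
    {i : Fin m} {j : Fin n} (h : x i j ≠ 0) : x i j = 1 := by
  have := hx i j
  omega

theorem Feasible.eq_one_of_forall_eq {m n : ℕ} {x : Fin m → Fin n → ℕ} (hfeas : Feasible x)
    {i₀ : Fin m} (h : ∀ i, i = i₀) (j : Fin n) : x i₀ j = 1 := by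
  rw [← hfeas j, Fintype.sum_eq_single i₀ fun i hi => absurd (h i) hi]

theorem Corr.mem_iff {m n : ℕ} {x : Fin m → Fin n → ℕ} {E : Set (Fin m × Fin n)}
    (hc : Corr x E) (a : Fin m × Fin n) : a ∈ E ↔ x a.1 a.2 = 1 :=
  (hc a.1 a.2).symm

section attackD

variable {m n : ℕ} {Dm Dp : Set (Fin m × Fin n)}

theorem attackD_self_iff {a : Fin m × Fin n} : attackD Dm Dp a a ↔ a ∈ Dm ∧ a ∉ Dp := by
  simp [attackD, attackF]

theorem attackD_self_iff_of_disjoint (hD : Dm ∩ Dp = ∅) {a : Fin m × Fin n} :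
    attackD Dm Dp a a ↔ a ∈ Dm := by
  rw [attackD_self_iff]
  exact and_iff_left_of_imp fun ha hp => (Set.eq_empty_iff_forall_notMem.1 hD a ⟨ha, hp⟩)

theorem not_attackD_of_mem {a b : Fin m × Fin n} (hb : b ∈ Dp) : ¬ attackD Dm Dp a b :=
  fun h => h.2 hb

theorem attackD_of_ne_machine {b : Fin m × Fin n} (hb : b ∉ Dp) {i : Fin m} (hi : i ≠ b.1) :
    attackD Dm Dp (i, b.2) b :=
  ⟨Or.inl ⟨hi, rfl⟩, hb⟩

theorem mem_of_forall_not_attackD {x : Fin m → Fin n → ℕ} (hfeas : Feasible x)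
    {E : Set (Fin m × Fin n)} (hc : Corr x E) {b : Fin m × Fin n} (hb : b ∉ Dp)
    (hun : ∀ a, ¬ attackD Dm Dp a b) : b ∈ E := by
  have hsingle : ∀ i, i = b.1 := fun i => by
    by_contra hi
    exact hun _ (attackD_of_ne_machine hb hi)
  exact (hc.mem_iff b).2 (hfeas.eq_one_of_forall_eq hsingle b.2)

end attackD

theorem not_satNeg_iff {m n : ℕ} {Dm : Set (Fin m × Fin n)} {x : Fin m → Fin n → ℕ}
    (hx : Binary x) {E : Set (Fin m × Fin n)} (hc : Corr x E) :
    ¬ SatNeg Dm x ↔ ∃ a ∈ E, a ∈ Dm := by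
  simp only [SatNeg, not_forall, exists_prop, hc.mem_iff]
  exact ⟨fun ⟨a, ha, h0⟩ => ⟨a, hx.eq_one_of_ne_zero h0, ha⟩,
    fun ⟨a, h1, ha⟩ => ⟨a, ha, by omega⟩⟩

theorem not_satPos_iff {m n : ℕ} {Dp : Set (Fin m × Fin n)} {x : Fin m → Fin n → ℕ}
    {E : Set (Fin m × Fin n)} (hc : Corr x E) :
    ¬ SatPos Dp x ↔ ∃ b ∉ E, b ∈ Dp := by
  simp only [SatPos, not_forall, exists_prop, hc.mem_iff]
  exact ⟨fun ⟨b, hb, h1⟩ => ⟨b, h1, hb⟩, fun ⟨b, h1, hb⟩ => ⟨b, hb, h1⟩⟩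

theorem stmt14 {m n : ℕ} (Dm Dp : Set (Fin m × Fin n)) (hD : ValidD Dm Dp)
    (x : Fin m → Fin n → ℕ) (hx : Binary x) (hfeas : Feasible x)
    (E : Set (Fin m × Fin n)) (hc : Corr x E) :
    (¬ SatNeg Dm x ↔ ∃ a ∈ E, attackD Dm Dp a a) ∧
    (¬ SatPos Dp x ↔ ∃ b, b ∉ E ∧ ∀ a, ¬ attackD Dm Dp a b) := by
  refine ⟨?_, ?_⟩
  · simp only [not_satNeg_iff hx hc, attackD_self_iff_of_disjoint hD.1]
  · rw [not_satPos_iff hc]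
    constructor
    · rintro ⟨b, hbE, hb⟩
      exact ⟨b, hbE, fun _ => not_attackD_of_mem hb⟩
    · rintro ⟨b, hbE, hun⟩
      by_contra hnone
      exact hbE (mem_of_forall_not_attackD hfeas hc (fun hb => hnone ⟨b, hbE, hb⟩) hun)
end

section
/- In the makespan scheduling problem, SEP and PEP are not sufficient for optimality: there exists an instance (M, J, p) and a feasible schedule S satisfying both SEP and PEP whose makespan strictly exceeds the optimal makespan. -/
open Finset

/-! Two machines and jobs of lengths `1, 1, 1, 1, 3, 3`. Putting the four unit jobs on one machine
and both long jobs on the other gives loads `4` and `6`. Moving a long job would create load `7`,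
and swapping a long job with a unit job only exchanges the loads, so neither exchange helps and
SEP and PEP hold. Exchanging two unit jobs against one long job, however, balances the loads
at `5` and `5`. -/

def ofAssignment {m n : ℕ} (σ : Fin n → Fin m) : Fin m → Fin n → ℕ :=
  fun i j => if σ j = i then 1 else 0

section ofAssignment

variable {m n : ℕ} (σ : Fin n → Fin m)

lemma ofAssignment_eq_one_iff {i : Fin m} {j : Fin n} : ofAssignment σ i j = 1 ↔ σ j = i := by
  unfold ofAssignment; split_ifs <;> simp [*]

lemma binary_ofAssignment : Binary (ofAssignment σ) := fun i j => by
  unfold ofAssignment; split_ifs <;> simp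

lemma feasible_ofAssignment : Feasible (ofAssignment σ) := fun j => by
  simp [ofAssignment]

lemma load_ofAssignment (p : Fin n → ℝ) (i : Fin m) :
    load p (ofAssignment σ) i = ∑ j with σ j = i, p j := by
  simp [load, ofAssignment, Finset.sum_filter]

end ofAssignment

def jobTimes : Fin 6 → ℝ := ![1, 1, 1, 1, 3, 3]

def unbalanced : Fin 6 → Fin 2 := ![0, 0, 0, 0, 1, 1]

def balanced : Fin 6 → Fin 2 := ![0, 0, 1, 1, 0, 1]

lemma jobTimes_nonneg (j : Fin 6) : 0 ≤ jobTimes j := by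
  fin_cases j <;> simp [jobTimes]

lemma load_unbalanced : load jobTimes (ofAssignment unbalanced) = ![4, 6] := by
  funext i
  fin_cases i <;> simp [load_ofAssignment, Finset.sum_filter, Fin.sum_univ_six, jobTimes,
    unbalanced] <;> norm_num

lemma load_balanced : load jobTimes (ofAssignment balanced) = ![5, 5] := by
  funext i
  fin_cases i <;> simp [load_ofAssignment, Finset.sum_filter, Fin.sum_univ_six, jobTimes,
    balanced] <;> norm_num

lemma jobTimes_of_unbalanced_eq_zero {j : Fin 6} (hj : unbalanced j = 0) : jobTimes j = 1 := by
  fin_cases j <;> simp_all [unbalanced, jobTimes]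

lemma jobTimes_of_unbalanced_eq_one {j : Fin 6} (hj : unbalanced j = 1) : jobTimes j = 3 := by
  fin_cases j <;> simp_all [unbalanced, jobTimes]

lemma crit_unbalanced {i : Fin 2} {j : Fin 6} (hc : Crit jobTimes (ofAssignment unbalanced) i j) :
    i = 1 ∧ jobTimes j = 3 := by
  obtain ⟨hij, hmax⟩ := hc
  rw [ofAssignment_eq_one_iff] at hij
  have hi : i = 1 := by
    by_contra hi
    have h := hmax 1
    rw [load_unbalanced, show i = 0 by lia] at h
    norm_num at h
  exact ⟨hi, jobTimes_of_unbalanced_eq_one (hij.trans hi)⟩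

lemma sep_unbalanced : SEP jobTimes (ofAssignment unbalanced) := by
  intro i j hc i' hi'
  obtain ⟨rfl, hj⟩ := crit_unbalanced hc
  obtain rfl : i' = 0 := by lia
  rw [load_unbalanced, hj]
  norm_num

lemma pep_unbalanced : PEP jobTimes (ofAssignment unbalanced) := by
  intro i j hc i' j' hi' _ hx _
  obtain ⟨rfl, hj⟩ := crit_unbalanced hc
  obtain rfl : i' = 0 := by lia
  rw [load_unbalanced, hj, jobTimes_of_unbalanced_eq_zero ((ofAssignment_eq_one_iff _).1 hx)]
  norm_num

theorem stmt16 :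
    ∃ (m n : ℕ) (p : Fin n → ℝ) (x y : Fin m → Fin n → ℕ),
      (∀ j, 0 ≤ p j) ∧ Binary x ∧ Feasible x ∧ SEP p x ∧ PEP p x ∧
      Binary y ∧ Feasible y ∧
      ∃ i, ∀ k, load p y k < load p x i := by
  refine ⟨2, 6, jobTimes, ofAssignment unbalanced, ofAssignment balanced, jobTimes_nonneg,
    binary_ofAssignment _, feasible_ofAssignment _, sep_unbalanced, pep_unbalanced,
    binary_ofAssignment _, feasible_ofAssignment _, 1, fun k => ?_⟩
  rw [load_balanced, load_unbalanced]
  fin_cases k <;> norm_num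
end
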